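/- arXiv:1904.02394 — 4 statements merged into one kernel-verified Lean document; each statement's English description precedes it below -/
import Mathlib

section
/- Fix ε > 0 and f₀ ∈ L¹₂(ℝ³) with 0 ≤ f₀ ≤ 1/ε, and let f ∈ 𝒴_ε(f₀). Then 0 ≤ 𝒮_ε(f), and there exists a constant C(f₀) > 0 depending only on the energy E(f₀) such that for every R > 1: 𝒮_ε(f) ≤ 80(|log ε| + log R) ∫_{|v|≤R} f(v)(1−ε f(v)) dv + C(f₀)/R + |log ε|·E(f₀)/R². -/
open MeasureTheory Real

noncomputable section

abbrev E3 := EuclideanSpace ℝ (Fin 3)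

/-- Fermi–Dirac entropy `𝒮_ε(f) = -(1/ε)∫ [εf log(εf) + (1-εf) log(1-εf)]`. -/
def fdEnt (ε : ℝ) (f : E3 → ℝ) : ℝ :=
  -ε⁻¹ * ∫ v, (ε * f v * log (ε * f v) + (1 - ε * f v) * log (1 - ε * f v))

/-- Mass `M(f) = ∫ f`. -/
def mass (f : E3 → ℝ) : ℝ := ∫ v, f v

/-- Energy `E(f) = ∫ f |v|²`. -/
def energy (f : E3 → ℝ) : ℝ := ∫ v, f v * ‖v‖ ^ 2

/-- The class `𝒴_ε(f₀)` : `f ∈ L¹₂`, `0 ≤ f ≤ 1/ε`, same mass and energy as `f₀`,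
and `𝒮_ε(f) ≥ 𝒮_ε(f₀)`. -/
def memY (ε : ℝ) (f₀ f : E3 → ℝ) : Prop :=
  Measurable f ∧ (∀ v, 0 ≤ f v) ∧ (∀ v, f v ≤ ε⁻¹) ∧
    Integrable (fun v => f v * (1 + ‖v‖ ^ 2)) ∧
    mass f = mass f₀ ∧ energy f = energy f₀ ∧ fdEnt ε f₀ ≤ fdEnt ε f

/-!
With `h` the binary entropy, `𝒮_ε(f) = ∫ ε⁻¹ h(ε f)`, which is nonnegative. Every estimate comes
from the Fenchel-type inequality `t - t log t ≤ t r + e^{-r}` (`t ≥ 0`), applied to `t = ε u` with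
`r = s - log ε`, so that the factor `ε⁻¹` is absorbed: `ε⁻¹ (t - t log t) ≤ u (s - log ε) + e^{-s}`.

On the ball `|v| ≤ R` one uses `h(x) ≤ 2 (y - y log y)` with `y = x (1 - x) = ε f (1 - ε f)`, and
`s = 4 log R` gives `8 (|log ε| + log R) f (1 - ε f) + 2 R⁻⁴`, whose integral over the ball costs
`8π / (3R)`. Outside the ball, `h(x) ≤ x - x log x` and `s = |v|` give
`f (|v| - log ε) + e^{-|v|}`, which `|v| > R` turns into `E/R + |log ε| E/R² + R⁻¹ ∫ |v| e^{-|v|}`,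
and the last integral is `24π`.
-/

open scoped Nat

namespace Real

lemma add_negMulLog_le (r : ℝ) {t : ℝ} (ht : 0 ≤ t) : t + negMulLog t ≤ t * r + exp (-r) := by
  -- `s log s ≥ s - 1` at `s = t eʳ`
  have key := negMulLog_le_one_sub_self (mul_nonneg ht (exp_pos r).le)
  have hexp : negMulLog (exp r) = -(exp r * r) := by simp [negMulLog]
  rw [negMulLog_mul, hexp] at key
  have hr : exp r * exp (-r) = 1 := by rw [← exp_add, add_neg_cancel, exp_zero]
  nlinarith [exp_pos (-r)]

lemma binEntropy_le_self_add_negMulLog {x : ℝ} (h1 : x ≤ 1) :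
    binEntropy x ≤ x + negMulLog x := by
  have := negMulLog_le_one_sub_self (sub_nonneg.2 h1)
  rw [binEntropy_eq_negMulLog_add_negMulLog_one_sub]
  linarith

lemma binEntropy_le_two_mul_of_le_half {x : ℝ} (h0 : 0 ≤ x) (h1 : x ≤ 2⁻¹) :
    binEntropy x ≤ 2 * (x * (1 - x) + negMulLog (x * (1 - x))) := by
  have hx : negMulLog x ≤ 2 * (1 - x) * negMulLog x := by
    nlinarith [negMulLog_nonneg h0 (by linarith : x ≤ 1)]
  have hy : (1 - x) * negMulLog x ≤ negMulLog (x * (1 - x)) := by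
    rw [negMulLog_mul]
    nlinarith [negMulLog_nonneg (by linarith : 0 ≤ 1 - x) (by linarith : 1 - x ≤ 1)]
  have := negMulLog_le_one_sub_self (by linarith : 0 ≤ 1 - x)
  rw [binEntropy_eq_negMulLog_add_negMulLog_one_sub]
  nlinarith

lemma binEntropy_le_two_mul {x : ℝ} (h0 : 0 ≤ x) (h1 : x ≤ 1) :
    binEntropy x ≤ 2 * (x * (1 - x) + negMulLog (x * (1 - x))) := by
  rcases le_total x 2⁻¹ with hx | hx
  · exact binEntropy_le_two_mul_of_le_half h0 hx
  · have := binEntropy_le_two_mul_of_le_half (x := 1 - x) (by linarith) (by linarith)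
    rwa [binEntropy_one_sub, sub_sub_cancel, mul_comm (1 - x)] at this

lemma inv_mul_add_negMulLog_mul_le (s : ℝ) {ε u : ℝ} (hε : 0 < ε) (hu : 0 ≤ u) :
    ε⁻¹ * (ε * u + negMulLog (ε * u)) ≤ u * (s - log ε) + exp (-s) := by
  have key := add_negMulLog_le (s - log ε) (mul_nonneg hε.le hu)
  rw [neg_sub, exp_sub, exp_log hε] at key
  calc ε⁻¹ * (ε * u + negMulLog (ε * u))
      ≤ ε⁻¹ * (ε * u * (s - log ε) + ε / exp s) := by gcongr
    _ = u * (s - log ε) + exp (-s) := by field_simp; rw [exp_neg]; field_simp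

lemma integrableOn_Ioi_pow_mul_exp_neg (k : ℕ) :
    IntegrableOn (fun y : ℝ => y ^ k * exp (-y)) (Set.Ioi 0) := by
  have := GammaIntegral_convergent (s := k + 1) (by positivity)
  simp only [add_sub_cancel_right, rpow_natCast] at this
  simpa only [mul_comm] using this

lemma integral_Ioi_pow_mul_exp_neg (k : ℕ) :
    ∫ y in Set.Ioi (0 : ℝ), y ^ k * exp (-y) = k ! := by
  rw [← Gamma_nat_eq_factorial, Gamma_eq_integral (by positivity)]
  simp only [add_sub_cancel_right, rpow_natCast, mul_comm]

end Real

section NormPowMulExpNegNorm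

open Module

variable {E : Type*} [NormedAddCommGroup E] [NormedSpace ℝ E] [FiniteDimensional ℝ E]
  [Nontrivial E]

lemma pow_finrank_sub_one_smul_pow_mul_exp_neg (n : ℕ) (y : ℝ) :
    y ^ (finrank ℝ E - 1) • (y ^ n * exp (-y)) = y ^ (n + finrank ℝ E - 1) * exp (-y) := by
  rw [smul_eq_mul, ← mul_assoc, ← pow_add, Nat.add_sub_assoc finrank_pos, add_comm n]

variable [MeasurableSpace E] [BorelSpace E] (μ : Measure E) [μ.IsAddHaarMeasure]

lemma integrable_norm_pow_mul_exp_neg_norm (n : ℕ) :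
    Integrable (fun x : E => ‖x‖ ^ n * exp (-‖x‖)) μ := by
  rw [integrable_fun_norm_addHaar μ (f := fun y => y ^ n * exp (-y))]
  simp only [pow_finrank_sub_one_smul_pow_mul_exp_neg]
  exact integrableOn_Ioi_pow_mul_exp_neg _

lemma integral_norm_pow_mul_exp_neg_norm (n : ℕ) :
    ∫ x, ‖x‖ ^ n * exp (-‖x‖) ∂μ =
      finrank ℝ E * μ.real (Metric.ball 0 1) * (n + finrank ℝ E - 1)! := by
  rw [integral_fun_norm_addHaar μ (fun y => y ^ n * exp (-y))]
  simp only [pow_finrank_sub_one_smul_pow_mul_exp_neg, integral_Ioi_pow_mul_exp_neg]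
  rw [nsmul_eq_mul, smul_eq_mul, mul_assoc]

end NormPowMulExpNegNorm

lemma MeasureTheory.Integrable.mul_of_abs_le {α : Type*} [MeasurableSpace α] {μ : Measure α}
    {f w g : α → ℝ}
    (hfw : Integrable (fun x => f x * w x) μ) (hf : AEStronglyMeasurable f μ)
    (hg : AEStronglyMeasurable g μ) (hf0 : ∀ x, 0 ≤ f x) (hgw : ∀ x, |g x| ≤ w x) :
    Integrable (fun x => f x * g x) μ := by
  refine hfw.mono' (hf.mul hg) (.of_forall fun x => ?_)
  rw [norm_mul, Real.norm_of_nonneg (hf0 x), Real.norm_eq_abs]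
  exact mul_le_mul_of_nonneg_left (hgw x) (hf0 x)

lemma integral_norm_mul_exp_neg_norm_E3 : ∫ v : E3, ‖v‖ * exp (-‖v‖) = 24 * π := by
  have := integral_norm_pow_mul_exp_neg_norm (volume : Measure E3) 1
  simp only [pow_one, finrank_euclideanSpace_fin, measureReal_def,
    EuclideanSpace.volume_ball_fin_three] at this
  rw [this, ENNReal.ofReal_one, one_pow, one_mul, ENNReal.toReal_ofReal (by positivity)]
  norm_num [Nat.factorial]
  ring

lemma fdEnt_eq_integral (ε : ℝ) (f : E3 → ℝ) :
    fdEnt ε f = ∫ v, ε⁻¹ * binEntropy (ε * f v) := by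
  have (p : ℝ) : p * log p + (1 - p) * log (1 - p) = -binEntropy p := by
    simp only [binEntropy, log_inv]; ring
  simp only [fdEnt, this, integral_neg, integral_const_mul]
  ring

section PointwiseBounds

variable {ε u : ℝ}

lemma mul_le_one_of_le_inv₀ (hε : 0 < ε) (hu : u ≤ ε⁻¹) : ε * u ≤ 1 :=
  (le_inv_mul_iff₀ hε).1 (by simpa using hu)

lemma inv_mul_binEntropy_mul_le (s : ℝ) (hε : 0 < ε) (hu0 : 0 ≤ u) (hu1 : u ≤ ε⁻¹) :
    ε⁻¹ * binEntropy (ε * u) ≤ u * (s - log ε) + exp (-s) := by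
  calc ε⁻¹ * binEntropy (ε * u) ≤ ε⁻¹ * (ε * u + negMulLog (ε * u)) := by
        gcongr; exact binEntropy_le_self_add_negMulLog (mul_le_one_of_le_inv₀ hε hu1)
    _ ≤ u * (s - log ε) + exp (-s) := inv_mul_add_negMulLog_mul_le s hε hu0

lemma inv_mul_binEntropy_mul_le_two_mul (s : ℝ) (hε : 0 < ε) (hu0 : 0 ≤ u) (hu1 : u ≤ ε⁻¹) :
    ε⁻¹ * binEntropy (ε * u) ≤ 2 * (u * (1 - ε * u) * (s - log ε) + exp (-s)) := by
  have hεu := mul_le_one_of_le_inv₀ hε hu1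
  have hy : ε * u * (1 - ε * u) = ε * (u * (1 - ε * u)) := by ring
  calc ε⁻¹ * binEntropy (ε * u)
      ≤ ε⁻¹ * (2 * (ε * (u * (1 - ε * u)) + negMulLog (ε * (u * (1 - ε * u))))) := by
        gcongr; rw [← hy]; exact binEntropy_le_two_mul (by positivity) hεu
    _ = 2 * (ε⁻¹ * (ε * (u * (1 - ε * u)) + negMulLog (ε * (u * (1 - ε * u))))) := by ring
    _ ≤ 2 * (u * (1 - ε * u) * (s - log ε) + exp (-s)) := by
        gcongr; exact inv_mul_add_negMulLog_mul_le s hε (mul_nonneg hu0 (by linarith))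

end PointwiseBounds

section EntropyBounds

open Metric

variable {ε R : ℝ} {f : E3 → ℝ}

lemma setIntegral_closedBall_inv_mul_binEntropy_le (hε : 0 < ε) (hR : 1 < R)
    (hf0 : ∀ v, 0 ≤ f v) (hf1 : ∀ v, f v ≤ ε⁻¹)
    (hH : IntegrableOn (fun v => ε⁻¹ * binEntropy (ε * f v)) (closedBall 0 R))
    (hg : IntegrableOn (fun v => f v * (1 - ε * f v)) (closedBall 0 R)) :
    ∫ v in closedBall (0 : E3) R, ε⁻¹ * binEntropy (ε * f v) ≤
      8 * (|log ε| + log R) * (∫ v in closedBall (0 : E3) R, f v * (1 - ε * f v)) +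
        8 * π / 3 / R := by
  have hR0 : 0 < R := by linarith
  have hexp : exp (-(4 * log R)) = (R ^ 4)⁻¹ := by
    rw [exp_neg, show (4 : ℝ) = (4 : ℕ) by norm_num, exp_nat_mul, exp_log hR0]
  have pointwise (v : E3) : ε⁻¹ * binEntropy (ε * f v) ≤
      8 * (|log ε| + log R) * (f v * (1 - ε * f v)) + 2 / R ^ 4 := by
    have hg0 : 0 ≤ f v * (1 - ε * f v) :=
      mul_nonneg (hf0 v) (sub_nonneg.2 (mul_le_one_of_le_inv₀ hε (hf1 v)))
    have := inv_mul_binEntropy_mul_le_two_mul (4 * log R) hε (hf0 v) (hf1 v)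
    have hs : 4 * log R - log ε ≤ 4 * (|log ε| + log R) := by
      linarith [neg_le_abs (log ε), abs_nonneg (log ε)]
    rw [hexp] at this
    linear_combination this + 2 * mul_le_mul_of_nonneg_left hs hg0
  have hconst : IntegrableOn (fun _ : E3 => 2 / R ^ 4) (closedBall 0 R) :=
    integrableOn_const measure_closedBall_lt_top.ne
  calc ∫ v in closedBall (0 : E3) R, ε⁻¹ * binEntropy (ε * f v)
      ≤ ∫ v in closedBall (0 : E3) R,
          (8 * (|log ε| + log R) * (f v * (1 - ε * f v)) + 2 / R ^ 4) :=
        setIntegral_mono_on hH ((hg.const_mul _).fun_add hconst)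
          measurableSet_closedBall fun v _ => pointwise v
    _ = 8 * (|log ε| + log R) * (∫ v in closedBall (0 : E3) R, f v * (1 - ε * f v)) +
        8 * π / 3 / R := by
      rw [integral_add (hg.const_mul _) hconst,
        integral_const_mul, setIntegral_const, measureReal_def,
        EuclideanSpace.volume_closedBall_fin_three, ENNReal.toReal_mul, ← ENNReal.ofReal_pow hR0.le,
        ENNReal.toReal_ofReal (by positivity), ENNReal.toReal_ofReal (by positivity), smul_eq_mul]
      congr 1
      field_simp
      ring

lemma setIntegral_compl_closedBall_inv_mul_binEntropy_le (hε : 0 < ε) (hR : 0 < R)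
    (hf0 : ∀ v, 0 ≤ f v) (hf1 : ∀ v, f v ≤ ε⁻¹)
    (hH : Integrable (fun v => ε⁻¹ * binEntropy (ε * f v)))
    (hfE : Integrable (fun v => f v * ‖v‖ ^ 2)) :
    ∫ v in (closedBall (0 : E3) R)ᶜ, ε⁻¹ * binEntropy (ε * f v) ≤
      (∫ v, f v * ‖v‖ ^ 2) / R + |log ε| * (∫ v, f v * ‖v‖ ^ 2) / R ^ 2 + 24 * π / R := by
  set T : E3 → ℝ := fun v =>
    (R⁻¹ + |log ε| * R⁻¹ ^ 2) * (f v * ‖v‖ ^ 2) + R⁻¹ * (‖v‖ * exp (-‖v‖))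
  have hW : Integrable (fun v : E3 => ‖v‖ * exp (-‖v‖)) := by
    simpa using integrable_norm_pow_mul_exp_neg_norm (volume : Measure E3) 1
  have hT : Integrable T := (hfE.const_mul _).fun_add (hW.const_mul _)
  have pointwise : ∀ v ∈ (closedBall (0 : E3) R)ᶜ, ε⁻¹ * binEntropy (ε * f v) ≤ T v := by
    intro v hv
    have hvR : 1 ≤ R⁻¹ * ‖v‖ := by
      rw [Set.mem_compl_iff, mem_closedBall, dist_zero_right, not_le] at hv
      rw [inv_mul_eq_div, one_le_div hR]
      exact hv.le
    have hfv := mul_nonneg (hf0 v) (norm_nonneg v)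
    have h1 := mul_le_mul_of_nonneg_left hvR hfv
    have h2 := mul_le_mul_of_nonneg_left (one_le_pow₀ (n := 2) hvR)
      (mul_nonneg (hf0 v) (abs_nonneg (log ε)))
    have h3 := mul_le_mul_of_nonneg_left hvR (exp_pos (-‖v‖)).le
    have h4 := mul_le_mul_of_nonneg_left (neg_le_abs (log ε)) (hf0 v)
    have := inv_mul_binEntropy_mul_le ‖v‖ hε (hf0 v) (hf1 v)
    simp only [T]
    linear_combination this + h1 + h2 + h3 + h4
  have hT0 (v : E3) : 0 ≤ T v := by
    have := hf0 v
    positivity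
  calc ∫ v in (closedBall (0 : E3) R)ᶜ, ε⁻¹ * binEntropy (ε * f v)
      ≤ ∫ v in (closedBall (0 : E3) R)ᶜ, T v :=
        setIntegral_mono_on hH.integrableOn hT.integrableOn measurableSet_closedBall.compl pointwise
    _ ≤ ∫ v, T v := setIntegral_le_integral hT (.of_forall hT0)
    _ = _ := by
      simp only [T]
      rw [integral_add (hfE.const_mul _) (hW.const_mul _), integral_const_mul, integral_const_mul,
        integral_norm_mul_exp_neg_norm_E3]
      ring

lemma fdEnt_nonneg (hε : 0 < ε) (hf0 : ∀ v, 0 ≤ f v) (hf1 : ∀ v, f v ≤ ε⁻¹) :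
    0 ≤ fdEnt ε f := by
  rw [fdEnt_eq_integral]
  exact integral_nonneg fun v => mul_nonneg (inv_nonneg.2 hε.le)
    (binEntropy_nonneg (mul_nonneg hε.le (hf0 v)) (mul_le_one_of_le_inv₀ hε (hf1 v)))

lemma integrable_mul_of_abs_le_one_add_sq {g : E3 → ℝ} (hf : Measurable f) (hf0 : ∀ v, 0 ≤ f v)
    (hfint : Integrable (fun v => f v * (1 + ‖v‖ ^ 2))) (hg : Measurable g)
    (hgw : ∀ v, |g v| ≤ 1 + ‖v‖ ^ 2) : Integrable (fun v => f v * g v) :=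
  hfint.mul_of_abs_le hf.aestronglyMeasurable hg.aestronglyMeasurable hf0 hgw

lemma integrable_inv_mul_binEntropy (hε : 0 < ε) (hf : Measurable f) (hf0 : ∀ v, 0 ≤ f v)
    (hf1 : ∀ v, f v ≤ ε⁻¹) (hfint : Integrable (fun v => f v * (1 + ‖v‖ ^ 2))) :
    Integrable (fun v => ε⁻¹ * binEntropy (ε * f v)) := by
  have hfv : Integrable (fun v => f v * ‖v‖) :=
    integrable_mul_of_abs_le_one_add_sq hf hf0 hfint measurable_norm fun v => by
      rw [abs_norm]; nlinarith [sq_nonneg (‖v‖ - 1)]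
  have hf' : Integrable f := by
    simpa using integrable_mul_of_abs_le_one_add_sq (g := fun _ => 1) hf hf0 hfint
      measurable_const fun v => by rw [abs_one]; nlinarith [sq_nonneg ‖v‖]
  have hexp : Integrable (fun v : E3 => exp (-‖v‖)) := by
    simpa using integrable_norm_pow_mul_exp_neg_norm (volume : Measure E3) 0
  refine integrable_of_le_of_le (g₁ := 0)
    (g₂ := fun v => f v * ‖v‖ - log ε * f v + exp (-‖v‖))
    ((binEntropy_continuous.measurable.comp (hf.const_mul ε)).const_mul ε⁻¹).aestronglyMeasurable
    (.of_forall fun v => mul_nonneg (inv_nonneg.2 hε.le)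
      (binEntropy_nonneg (mul_nonneg hε.le (hf0 v)) (mul_le_one_of_le_inv₀ hε (hf1 v))))
    (.of_forall fun v => ?_) (integrable_zero _ _ _) ((hfv.sub (hf'.const_mul _)).add hexp)
  have := inv_mul_binEntropy_mul_le ‖v‖ hε (hf0 v) (hf1 v)
  dsimp only
  linarith

theorem fdEnt_le (hε : 0 < ε) (hR : 1 < R) (hf : Measurable f) (hf0 : ∀ v, 0 ≤ f v)
    (hf1 : ∀ v, f v ≤ ε⁻¹) (hfint : Integrable (fun v => f v * (1 + ‖v‖ ^ 2))) :
    fdEnt ε f ≤ 8 * (|log ε| + log R) * (∫ v in closedBall (0 : E3) R, f v * (1 - ε * f v)) +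
      (energy f + 80 * π / 3) / R + |log ε| * energy f / R ^ 2 := by
  have hH := integrable_inv_mul_binEntropy hε hf hf0 hf1 hfint
  have hg : Integrable (fun v => f v * (1 - ε * f v)) :=
    integrable_mul_of_abs_le_one_add_sq hf hf0 hfint (by fun_prop) fun v => by
      have := mul_le_one_of_le_inv₀ hε (hf1 v)
      rw [abs_of_nonneg (by linarith)]
      nlinarith [mul_nonneg hε.le (hf0 v), sq_nonneg ‖v‖]
  have hfE : Integrable (fun v => f v * ‖v‖ ^ 2) :=
    integrable_mul_of_abs_le_one_add_sq hf hf0 hfint (by fun_prop) fun v => by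
      rw [abs_of_nonneg (sq_nonneg _)]; linarith
  have hball := setIntegral_closedBall_inv_mul_binEntropy_le hε hR hf0 hf1 hH.integrableOn
    hg.integrableOn
  have htail := setIntegral_compl_closedBall_inv_mul_binEntropy_le hε (zero_lt_one.trans hR)
    hf0 hf1 hH hfE
  rw [fdEnt_eq_integral, ← integral_add_compl measurableSet_closedBall hH, energy]
  linear_combination hball + htail

end EntropyBounds

/-- Upper bound on the Fermi–Dirac entropy: `0 ≤ 𝒮_ε(f)` and, for every `R > 1`,
`𝒮_ε(f) ≤ 80(|log ε| + log R) ∫_{|v|≤R} f(1-εf) + C(f₀)/R + |log ε| E(f₀)/R²`,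
with `C(f₀) > 0` depending only on the energy `E(f₀)`. -/
theorem stmt2 :
    ∃ C : ℝ → ℝ, (∀ E, 0 < C E) ∧
      ∀ (ε : ℝ), 0 < ε → ∀ f₀ f : E3 → ℝ,
        Measurable f₀ → (∀ v, 0 ≤ f₀ v) → (∀ v, f₀ v ≤ ε⁻¹) →
        Integrable (fun v => f₀ v * (1 + ‖v‖ ^ 2)) →
        memY ε f₀ f →
        0 ≤ fdEnt ε f ∧
        ∀ R : ℝ, 1 < R →
          fdEnt ε f ≤
            80 * (|log ε| + log R) *
                (∫ v in Metric.closedBall (0 : E3) R, f v * (1 - ε * f v)) +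
              C (energy f₀) / R + |log ε| * energy f₀ / R ^ 2 := by
  refine ⟨fun E => |E| + 80 * π / 3, fun E => by positivity, ?_⟩
  rintro ε hε f₀ f - - - - ⟨hf, hf0, hf1, hfint, -, henergy, -⟩
  refine ⟨fdEnt_nonneg hε hf0 hf1, fun R hR => ?_⟩
  have hE : 0 ≤ energy f := integral_nonneg fun v => mul_nonneg (hf0 v) (sq_nonneg _)
  have hI : 0 ≤ ∫ v in Metric.closedBall (0 : E3) R, f v * (1 - ε * f v) :=
    setIntegral_nonneg measurableSet_closedBall fun v _ =>
      mul_nonneg (hf0 v) (sub_nonneg.2 (mul_le_one_of_le_inv₀ hε (hf1 v)))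
  have hlog : 0 ≤ |log ε| + log R := add_nonneg (abs_nonneg _) (log_pos hR).le
  dsimp only
  rw [← henergy, abs_of_nonneg hE]
  calc fdEnt ε f
      ≤ 8 * (|log ε| + log R) * (∫ v in Metric.closedBall (0 : E3) R, f v * (1 - ε * f v)) +
          (energy f + 80 * π / 3) / R + |log ε| * energy f / R ^ 2 :=
        fdEnt_le hε hR hf hf0 hf1 hfint
    _ ≤ _ := by gcongr; norm_num

end
end

section
/- Let f₀ ∈ L¹₂(ℝ³) be nonnegative and bounded with ‖f₀‖_∞ = 1/ε₀ ∈ (0,∞), 𝒮_{ε₀}(f₀) > 0, and finite Boltzmann entropy H(f₀). Then for every δ > 0 there exists η(δ) > 0, depending only on M(f₀), E(f₀) and H(f₀), such that for every ε ∈ (0, ε₀], every f ∈ 𝒴_ε(f₀), and every measurable set A ⊂ ℝ³ with Lebesgue measure |A| ≤ η(δ), one has ∫_A f(v)(1−ε f(v)) dv ≤ δ. In particular, for any f ∈ 𝒴_ε(f₀) one has ∫ f log f dv ≤ ∫ f₀ log f₀ dv + M(f₀). -/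
/-!
On `[0, 1]` the Fermi–Dirac integrand `φ(x) = x log x + (1 - x) log (1 - x)` is squeezed between
`x log x - x` and `x log x`. Evaluated at `x = εf` and `x = εf₀` and integrated, this turns
`𝒮_ε(f) ≥ 𝒮_ε(f₀)` and `M(f) = M(f₀)` into `H(f) ≤ H(f₀) + M(f₀)`. Young's inequality
`-y log y ≤ y |v|² + e^{-1-|v|²}` makes `p = f log f + f |v|² + e^{-1-|v|²}` nonnegative, with
`∫ p ≤ C` for a constant `C` depending only on `M(f₀)`, `E(f₀)`, `H(f₀)`. Since `f ≤ K + p / log K`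
for every `K > 1`, we get `∫_A f (1 - εf) ≤ ∫_A f ≤ K |A| + C / log K`, and `K = exp (2C/δ)`,
`|A| ≤ δ / (2K)` make this at most `δ`.
-/
open MeasureTheory Real

noncomputable section

/-- Boltzmann entropy `H(f) = ∫ f log f`. -/
def boltzEnt (f : E3 → ℝ) : ℝ := ∫ v, f v * log (f v)

namespace Real

lemma neg_mul_log_le_mul_add_exp {x : ℝ} (hx : 0 ≤ x) (t : ℝ) :
    -(x * log x) ≤ x * t + exp (-1 - t) := by
  rcases hx.eq_or_lt with rfl | hx
  · simpa using (exp_pos _).le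
  -- `y - 1 ≤ y log y` at `y = x e^{1+t}`
  have h := self_sub_one_le_mul_log (mul_nonneg hx.le (exp_pos (1 + t)).le)
  rw [log_mul hx.ne' (exp_pos _).ne', log_exp] at h
  have hexp : exp (-1 - t) * exp (1 + t) = 1 := by rw [← exp_add]; simp
  have := mul_le_mul_of_nonneg_left h (exp_pos (-1 - t)).le
  linear_combination this + x * (log x + t) * hexp

lemma le_add_div_log_of_mul_log_le {K y p : ℝ} (hK : 1 < K) (hp : 0 ≤ p)
    (hyp : y * log y ≤ p) : y ≤ K + p / log K := by
  have hlogK : 0 < log K := log_pos hK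
  rcases le_or_gt y K with hyK | hyK
  · linarith [div_nonneg hp hlogK.le]
  · have : y * log K ≤ y * log y :=
      mul_le_mul_of_nonneg_left (log_le_log (by linarith) hyK.le) (by linarith)
    linarith [(le_div_iff₀ hlogK).2 (this.trans hyp)]

lemma mul_log_const_mul {ε : ℝ} (hε : ε ≠ 0) (y : ℝ) :
    ε * y * log (ε * y) = ε * (y * log y) + ε * log ε * y := by
  rcases eq_or_ne y 0 with rfl | hy
  · simp
  · rw [log_mul hε hy]; ring

end Real

def fermiDirac (x : ℝ) : ℝ := x * log x + (1 - x) * log (1 - x)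

lemma continuous_fermiDirac : Continuous fermiDirac :=
  continuous_mul_log.add (continuous_mul_log.comp (continuous_const.sub continuous_id))

lemma fermiDirac_le_mul_log {x : ℝ} (h0 : 0 ≤ x) (h1 : x ≤ 1) : fermiDirac x ≤ x * log x := by
  have := mul_log_nonpos (sub_nonneg.2 h1) (sub_le_self 1 h0)
  unfold fermiDirac; linarith

lemma mul_log_sub_le_fermiDirac {x : ℝ} (h1 : x ≤ 1) : x * log x - x ≤ fermiDirac x := by
  have := self_sub_one_le_mul_log (sub_nonneg.2 h1)
  unfold fermiDirac; linarith

lemma fdEnt_eq (ε : ℝ) (f : E3 → ℝ) : fdEnt ε f = -ε⁻¹ * ∫ v, fermiDirac (ε * f v) := rfl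

section BoundedDensity

variable {V : Type*} [NormedAddCommGroup V] [InnerProductSpace ℝ V] [FiniteDimensional ℝ V]
  [MeasurableSpace V] [BorelSpace V]

lemma integrable_exp_neg_one_sub_norm_sq : Integrable fun v : V => exp (-1 - ‖v‖ ^ 2) := by
  have h : Integrable fun v : V => exp (-‖v‖ ^ 2) := by
    simpa [Complex.norm_exp, ← Complex.ofReal_pow] using
      (GaussianFourier.integrable_cexp_neg_mul_sq_norm_add (V := V) (b := 1) one_pos 0 0).norm
  simpa only [← exp_add, ← sub_eq_add_neg] using h.const_mul (exp (-1))

structure IsBoundedDensity (ε : ℝ) (g : V → ℝ) : Prop where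
  measurable : Measurable g
  nonneg : ∀ v, 0 ≤ g v
  ae_le_inv : ∀ᵐ v, g v ≤ ε⁻¹
  integrable_mul_one_add_norm_sq : Integrable fun v => g v * (1 + ‖v‖ ^ 2)

namespace IsBoundedDensity

variable {ε : ℝ} {g : V → ℝ}

lemma of_le {ε₀ : ℝ} (hg : IsBoundedDensity ε₀ g) (hε : 0 < ε) (hεε₀ : ε ≤ ε₀) :
    IsBoundedDensity ε g where
  measurable := hg.measurable
  nonneg := hg.nonneg
  ae_le_inv := hg.ae_le_inv.mono fun _ hv => hv.trans (inv_anti₀ hε hεε₀)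
  integrable_mul_one_add_norm_sq := hg.integrable_mul_one_add_norm_sq

lemma ae_mul_le_one (hg : IsBoundedDensity ε g) (hε : 0 < ε) : ∀ᵐ v, ε * g v ≤ 1 :=
  hg.ae_le_inv.mono fun _ hv =>
    (mul_le_mul_of_nonneg_left hv hε.le).trans_eq (mul_inv_cancel₀ hε.ne')

lemma integrable (hg : IsBoundedDensity ε g) : Integrable g := by
  refine hg.integrable_mul_one_add_norm_sq.mono' hg.measurable.aestronglyMeasurable
    (.of_forall fun v => ?_)
  rw [norm_of_nonneg (hg.nonneg v)]
  nlinarith [hg.nonneg v, sq_nonneg ‖v‖]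

lemma integrable_mul_norm_sq (hg : IsBoundedDensity ε g) :
    Integrable fun v => g v * ‖v‖ ^ 2 := by
  have : (fun v => g v * ‖v‖ ^ 2) = fun v => g v * (1 + ‖v‖ ^ 2) - g v := by ext; ring
  rw [this]
  exact hg.integrable_mul_one_add_norm_sq.sub hg.integrable

lemma integrable_mul_log (hg : IsBoundedDensity ε g) :
    Integrable fun v => g v * log (g v) := by
  refine integrable_of_le_of_le (hg.measurable.mul hg.measurable.log).aestronglyMeasurable
    (g₁ := fun v => -(g v * ‖v‖ ^ 2 + exp (-1 - ‖v‖ ^ 2))) (g₂ := fun v => g v * log ε⁻¹)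
    (.of_forall fun v => ?_) (hg.ae_le_inv.mono fun v hv => ?_)
    (hg.integrable_mul_norm_sq.add integrable_exp_neg_one_sub_norm_sq).neg
    (hg.integrable.mul_const _)
  · linarith [neg_mul_log_le_mul_add_exp (hg.nonneg v) (‖v‖ ^ 2)]
  · rcases (hg.nonneg v).eq_or_lt with h | h
    · simp [← h]
    · exact mul_le_mul_of_nonneg_left (log_le_log h hv) h.le

lemma integrable_fermiDirac (hg : IsBoundedDensity ε g) (hε : 0 < ε) :
    Integrable fun v => fermiDirac (ε * g v) := by
  refine integrable_of_le_of_le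
    (continuous_fermiDirac.measurable.comp (hg.measurable.const_mul ε)).aestronglyMeasurable
    (g₁ := fun v => -(ε * (g v * (1 + ‖v‖ ^ 2)) + exp (-1 - ‖v‖ ^ 2))) (g₂ := fun _ => 0)
    ((hg.ae_mul_le_one hε).mono fun v hv => ?_) ((hg.ae_mul_le_one hε).mono fun v hv => ?_)
    ((hg.integrable_mul_one_add_norm_sq.const_mul ε).add integrable_exp_neg_one_sub_norm_sq).neg
    (integrable_zero _ _ _)
  · have hx := mul_nonneg hε.le (hg.nonneg v)
    have := neg_mul_log_le_mul_add_exp hx (‖v‖ ^ 2)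
    have := mul_log_sub_le_fermiDirac hv
    show _ ≤ fermiDirac (ε * g v)
    nlinarith
  · have hx := mul_nonneg hε.le (hg.nonneg v)
    exact (fermiDirac_le_mul_log hx hv).trans (mul_log_nonpos hx hv)

end IsBoundedDensity

end BoundedDensity

lemma ae_le_of_eLpNorm_top_le {α : Type*} [MeasurableSpace α] {μ : Measure α} {f : α → ℝ}
    {c : ℝ} (hc : 0 ≤ c) (h : eLpNorm f ⊤ μ ≤ ENNReal.ofReal c) : ∀ᵐ x ∂μ, f x ≤ c := by
  rw [eLpNorm_exponent_top] at h
  filter_upwards [enorm_ae_le_eLpNormEssSup f μ] with x hx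
  have : ‖f x‖ ≤ c := by
    rw [← ENNReal.ofReal_le_ofReal_iff hc, ofReal_norm]
    exact hx.trans h
  exact (le_abs_self _).trans this

section Entropy

variable {ε : ℝ}

lemma mul_boltzEnt_sub_le_integral_fermiDirac {g : E3 → ℝ} (hg : IsBoundedDensity ε g)
    (hε : 0 < ε) :
    ε * boltzEnt g + (ε * log ε - ε) * mass g ≤ ∫ v, fermiDirac (ε * g v) := by
  have hH := hg.integrable_mul_log.const_mul ε
  have hM := hg.integrable.const_mul (ε * log ε - ε)
  calc ε * boltzEnt g + (ε * log ε - ε) * mass g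
      = ∫ v, (ε * (g v * log (g v)) + (ε * log ε - ε) * g v) := by
        rw [integral_add hH hM, integral_const_mul, integral_const_mul]; rfl
    _ ≤ ∫ v, fermiDirac (ε * g v) :=
        integral_mono_ae (hH.add hM) (hg.integrable_fermiDirac hε)
          ((hg.ae_mul_le_one hε).mono fun v hv => by
            have := mul_log_sub_le_fermiDirac hv
            rw [mul_log_const_mul hε.ne'] at this
            linarith)

lemma integral_fermiDirac_le_mul_boltzEnt_add {g : E3 → ℝ} (hg : IsBoundedDensity ε g)
    (hε : 0 < ε) :
    ∫ v, fermiDirac (ε * g v) ≤ ε * boltzEnt g + ε * log ε * mass g := by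
  have hH := hg.integrable_mul_log.const_mul ε
  have hM := hg.integrable.const_mul (ε * log ε)
  calc ∫ v, fermiDirac (ε * g v)
      ≤ ∫ v, (ε * (g v * log (g v)) + ε * log ε * g v) :=
        integral_mono_ae (hg.integrable_fermiDirac hε) (hH.add hM)
          ((hg.ae_mul_le_one hε).mono fun v hv => by
            have := fermiDirac_le_mul_log (mul_nonneg hε.le (hg.nonneg v)) hv
            rwa [mul_log_const_mul hε.ne'] at this)
    _ = ε * boltzEnt g + ε * log ε * mass g := by
        rw [integral_add hH hM, integral_const_mul, integral_const_mul]; rfl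

lemma boltzEnt_le_boltzEnt_add_mass {f₀ f : E3 → ℝ} (hε : 0 < ε) (hf₀ : IsBoundedDensity ε f₀)
    (hf : IsBoundedDensity ε f) (hmass : mass f = mass f₀) (hS : fdEnt ε f₀ ≤ fdEnt ε f) :
    boltzEnt f ≤ boltzEnt f₀ + mass f₀ := by
  rw [fdEnt_eq, fdEnt_eq, mul_le_mul_left_of_neg (neg_neg_of_pos (inv_pos.2 hε))] at hS
  have h₁ := mul_boltzEnt_sub_le_integral_fermiDirac hf hε
  have h₂ := integral_fermiDirac_le_mul_boltzEnt_add hf₀ hε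
  rw [hmass] at h₁
  have : ε * boltzEnt f ≤ ε * (boltzEnt f₀ + mass f₀) := by linarith
  exact le_of_mul_le_mul_left this hε

end Entropy

lemma setIntegral_le_mul_add_div_log {α : Type*} [MeasurableSpace α] {μ : Measure α}
    {g p : α → ℝ} {C K : ℝ} (hK : 1 < K) (hg : Integrable g μ) (hp : Integrable p μ)
    (hp0 : ∀ x, 0 ≤ p x) (hgp : ∀ x, g x * log (g x) ≤ p x) (hpC : ∫ x, p x ∂μ ≤ C)
    {A : Set α} (hA : μ A ≠ ⊤) :
    ∫ x in A, g x ∂μ ≤ μ.real A * K + C / log K := by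
  have hKA : IntegrableOn (fun _ => K) A μ := integrableOn_const hA
  have hpA : IntegrableOn (fun x => p x / log K) A μ := (hp.div_const _).integrableOn
  calc ∫ x in A, g x ∂μ ≤ ∫ x in A, (K + p x / log K) ∂μ :=
        setIntegral_mono hg.integrableOn (hKA.add hpA)
          fun x => le_add_div_log_of_mul_log_le hK (hp0 x) (hgp x)
    _ = μ.real A * K + (∫ x in A, p x ∂μ) / log K := by
        rw [integral_add hKA hpA, setIntegral_const, integral_div, smul_eq_mul]
    _ ≤ μ.real A * K + C / log K := by
        have := log_pos hK
        gcongr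
        exact (setIntegral_le_integral hp (.of_forall hp0)).trans hpC

def entropyMomentBound (M E H : ℝ) : ℝ := max (H + M + E + ∫ v : E3, exp (-1 - ‖v‖ ^ 2)) 1

def absContRadius (δ M E H : ℝ) : ℝ := δ / (2 * exp (2 * entropyMomentBound M E H / δ))

lemma setIntegral_le_of_volume_le_absContRadius {ε δ M E H : ℝ} {f : E3 → ℝ}
    (hf : IsBoundedDensity ε f) (hδ : 0 < δ) (hHE : boltzEnt f + energy f ≤ H + M + E)
    {A : Set E3} (hA : volume A ≤ ENNReal.ofReal (absContRadius δ M E H)) :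
    ∫ v in A, f v ≤ δ := by
  set C := entropyMomentBound M E H
  set K := exp (2 * C / δ)
  have hC : 1 ≤ C := le_max_right _ _
  have hlogK : log K = 2 * C / δ := log_exp _
  have hK : 1 < K := one_lt_exp_iff.2 (by positivity)
  have hf_log := hf.integrable_mul_log
  have hf_energy := hf.integrable_mul_norm_sq
  have hf_sum : Integrable fun v => f v * log (f v) + f v * ‖v‖ ^ 2 := hf_log.add hf_energy
  have hp : Integrable fun v => f v * log (f v) + f v * ‖v‖ ^ 2 + exp (-1 - ‖v‖ ^ 2) :=
    hf_sum.add integrable_exp_neg_one_sub_norm_sq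
  have hpC : ∫ v, (f v * log (f v) + f v * ‖v‖ ^ 2 + exp (-1 - ‖v‖ ^ 2)) ≤ C := by
    rw [integral_add hf_sum integrable_exp_neg_one_sub_norm_sq,
      integral_add hf_log hf_energy]
    exact le_trans (by unfold boltzEnt energy at hHE; linarith) (le_max_left _ _)
  have hAK : volume.real A ≤ δ / (2 * K) := ENNReal.toReal_le_of_le_ofReal (by positivity) hA
  calc ∫ v in A, f v ≤ volume.real A * K + C / log K :=
        setIntegral_le_mul_add_div_log hK hf.integrable hp
          (fun v => by linarith [neg_mul_log_le_mul_add_exp (hf.nonneg v) (‖v‖ ^ 2)])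
          (fun v => by nlinarith [hf.nonneg v, sq_nonneg ‖v‖, exp_pos (-1 - ‖v‖ ^ 2)])
          hpC (ne_top_of_le_ne_top ENNReal.ofReal_ne_top hA)
    _ ≤ δ / (2 * K) * K + C / (2 * C / δ) := by rw [hlogK]; gcongr
    _ = δ := by field_simp; ring

/-- Uniform absolute continuity of `∫_A f(1-εf)` over `ε ∈ (0,ε₀]` and `f ∈ 𝒴_ε(f₀)`:
for each `δ > 0` there is `η(δ) > 0`, depending only on `M(f₀)`, `E(f₀)` and `H(f₀)`,
such that `|A| ≤ η(δ)` implies `∫_A f(1-εf) ≤ δ`.  In particular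
`∫ f log f ≤ ∫ f₀ log f₀ + M(f₀)`. -/
theorem stmt4 :
    ∃ η : ℝ → ℝ → ℝ → ℝ → ℝ,
      ∀ (ε₀ : ℝ) (f₀ : E3 → ℝ), 0 < ε₀ →
        Measurable f₀ → (∀ v, 0 ≤ f₀ v) →
        Integrable (fun v => f₀ v * (1 + ‖v‖ ^ 2)) →
        eLpNorm f₀ ⊤ volume = ENNReal.ofReal ε₀⁻¹ →
        0 < fdEnt ε₀ f₀ →
        Integrable (fun v => f₀ v * log (f₀ v)) →
        ∀ δ : ℝ, 0 < δ →
          0 < η δ (mass f₀) (energy f₀) (boltzEnt f₀) ∧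
          ∀ ε : ℝ, 0 < ε → ε ≤ ε₀ → ∀ f : E3 → ℝ, memY ε f₀ f →
            (∀ A : Set E3, MeasurableSet A →
                volume A ≤ ENNReal.ofReal (η δ (mass f₀) (energy f₀) (boltzEnt f₀)) →
                ∫ v in A, f v * (1 - ε * f v) ≤ δ) ∧
            boltzEnt f ≤ boltzEnt f₀ + mass f₀ := by
  refine ⟨absContRadius, fun ε₀ f₀ hε₀ hf₀m hf₀0 hf₀int hf₀sup _ _ δ hδ =>
    ⟨by unfold absContRadius; positivity, fun ε hε hεε₀ f hf => ?_⟩⟩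
  obtain ⟨hfm, hf0, hfle, hfint, hmass, henergy, hS⟩ := hf
  have hf₀ : IsBoundedDensity ε f₀ :=
    IsBoundedDensity.of_le ⟨hf₀m, hf₀0, ae_le_of_eLpNorm_top_le (inv_pos.2 hε₀).le hf₀sup.le,
      hf₀int⟩ hε hεε₀
  have hf : IsBoundedDensity ε f := ⟨hfm, hf0, .of_forall hfle, hfint⟩
  have hH := boltzEnt_le_boltzEnt_add_mass hε hf₀ hf hmass hS
  refine ⟨fun A _ hA => ?_, hH⟩
  have hεf : ∀ v, 0 ≤ ε * f v ∧ ε * f v ≤ 1 := fun v =>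
    ⟨mul_nonneg hε.le (hf0 v), (mul_le_mul_of_nonneg_left (hfle v) hε.le).trans_eq
      (mul_inv_cancel₀ hε.ne')⟩
  calc ∫ v in A, f v * (1 - ε * f v)
      ≤ ∫ v in A, f v :=
        integral_mono_of_nonneg (.of_forall fun v => mul_nonneg (hf0 v) (by linarith [hεf v]))
          hf.integrable.integrableOn
          (.of_forall fun v => mul_le_of_le_one_right (hf0 v) (by linarith [hεf v]))
    _ ≤ δ := setIntegral_le_of_volume_le_absContRadius hf hδ (by rw [henergy]; linarith) hA

end
end

section
/- Let ε > 0 and let f, g ∈ L¹(ℝ³) ∩ L²(ℝ³) satisfy 0 ≤ f ≤ 1/ε, 0 ≤ g ≤ 1/ε, ∫ f dv = ∫ g dv, with H(f), H(g), 𝒮_ε(f), 𝒮_ε(g) all finite. Then | ℋ_ε(f|g) − ℋ₀(f|g) | ≤ ε · max( ‖f‖²_{L²}, ‖g‖²_{L²} ), where ℋ_ε(f|g) = 𝒮_ε(g) − 𝒮_ε(f) and ℋ₀(f|g) = H(f) − H(g). -/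
open MeasureTheory Real

noncomputable section

/-!
With `φ(x) = x + (1 - x) log (1 - x)`, splitting `log (ε f) = log ε + log f` gives
`𝒮_ε(f) + H(f) = (1 - log ε) ∫ f - ε⁻¹ ∫ φ(ε f)`. Since the masses agree, the difference of
relative entropies is `ε⁻¹ (∫ φ(ε f) - ∫ φ(ε g))`, and `0 ≤ φ(x) ≤ x²` for `x ≤ 1`
(both from `log t ≤ t - 1`) bounds each integral by `ε² ‖·‖²_{L²}`.
-/

def fdCorrection (x : ℝ) : ℝ := x + (1 - x) * log (1 - x)

lemma fdCorrection_nonneg {x : ℝ} (hx : x ≤ 1) : 0 ≤ fdCorrection x := by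
  have := Real.self_sub_one_le_mul_log (sub_nonneg.2 hx)
  unfold fdCorrection
  linarith

lemma fdCorrection_le_sq {x : ℝ} (hx : x ≤ 1) : fdCorrection x ≤ x ^ 2 := by
  have hlog : (1 - x) * log (1 - x) ≤ (1 - x) * -x := by
    rcases (sub_nonneg.2 hx).eq_or_lt with h | h
    · simp [← h]
    · gcongr
      linarith [Real.log_le_sub_one_of_pos h]
  unfold fdCorrection
  linarith

lemma mul_mul_log_mul {ε : ℝ} (hε : ε ≠ 0) (y : ℝ) :
    ε * y * log (ε * y) = ε * log ε * y + ε * (y * log y) := by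
  rcases eq_or_ne y 0 with rfl | hy
  · simp
  · rw [Real.log_mul hε hy]
    ring

lemma fdEnt_add_boltzEnt {ε : ℝ} (hε : ε ≠ 0) {f : E3 → ℝ} (hf : Integrable f)
    (hH : Integrable (fun v => f v * log (f v)))
    (hS : Integrable (fun v =>
      ε * f v * log (ε * f v) + (1 - ε * f v) * log (1 - ε * f v))) :
    fdEnt ε f + boltzEnt f = (1 - log ε) * (∫ v, f v) - ε⁻¹ * ∫ v, fdCorrection (ε * f v) := by
  have hsplit : ∀ v, ε * f v * log (ε * f v) + (1 - ε * f v) * log (1 - ε * f v) =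
      (ε * log ε - ε) * f v + ε * (f v * log (f v)) + fdCorrection (ε * f v) := by
    intro v
    rw [mul_mul_log_mul hε, fdCorrection]
    ring
  have hboltz : Integrable (fun v => (ε * log ε - ε) * f v + ε * (f v * log (f v))) :=
    (hf.const_mul _).add (hH.const_mul _)
  have hφ : Integrable (fun v => fdCorrection (ε * f v)) :=
    (hS.sub hboltz).congr (ae_of_all _ fun v => by simp [hsplit])
  simp only [fdEnt, boltzEnt, hsplit]
  rw [integral_add hboltz hφ, integral_add (hf.const_mul _) (hH.const_mul _),
    integral_const_mul, integral_const_mul]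
  field_simp
  ring

lemma integral_fdCorrection_le {α : Type*} [MeasurableSpace α] {μ : Measure α} {ε : ℝ}
    {f : α → ℝ} (hf : ∀ a, ε * f a ≤ 1) (hf2 : Integrable (fun a => f a ^ 2) μ) :
    ∫ a, fdCorrection (ε * f a) ∂μ ≤ ε ^ 2 * ∫ a, f a ^ 2 ∂μ := by
  rw [← integral_const_mul]
  refine integral_mono_of_nonneg (ae_of_all _ fun a => fdCorrection_nonneg (hf a))
    (hf2.const_mul _) (ae_of_all _ fun a => ?_)
  simpa [mul_pow] using fdCorrection_le_sq (hf a)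

theorem stmt13_general (ε : ℝ) (hε : 0 < ε) (f g : E3 → ℝ)
    (hfint : Integrable f) (hfL2 : MemLp f 2 volume)
    (hgint : Integrable g) (hgL2 : MemLp g 2 volume)
    (hfε : ∀ v, f v ≤ ε⁻¹)
    (hgε : ∀ v, g v ≤ ε⁻¹)
    (hmass : (∫ v, f v) = ∫ v, g v)
    (hHf : Integrable (fun v => f v * log (f v)))
    (hHg : Integrable (fun v => g v * log (g v)))
    (hSf : Integrable (fun v =>
      ε * f v * log (ε * f v) + (1 - ε * f v) * log (1 - ε * f v)))
    (hSg : Integrable (fun v =>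
      ε * g v * log (ε * g v) + (1 - ε * g v) * log (1 - ε * g v))) :
    |(fdEnt ε g - fdEnt ε f) - (boltzEnt f - boltzEnt g)| ≤
      ε * max (∫ v, (f v) ^ 2) (∫ v, (g v) ^ 2) := by
  have hεf : ∀ v, ε * f v ≤ 1 := fun v => (le_inv_mul_iff₀ hε).1 (by simpa using hfε v)
  have hεg : ∀ v, ε * g v ≤ 1 := fun v => (le_inv_mul_iff₀ hε).1 (by simpa using hgε v)
  have hdiff : (fdEnt ε g - fdEnt ε f) - (boltzEnt f - boltzEnt g) =
      ε⁻¹ * ((∫ v, fdCorrection (ε * f v)) - ∫ v, fdCorrection (ε * g v)) := by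
    linear_combination fdEnt_add_boltzEnt hε.ne' hgint hHg hSg -
      fdEnt_add_boltzEnt hε.ne' hfint hHf hSf - (1 - log ε) * hmass
  have hbound : |(∫ v, fdCorrection (ε * f v)) - ∫ v, fdCorrection (ε * g v)| ≤
      max (ε ^ 2 * ∫ v, f v ^ 2) (ε ^ 2 * ∫ v, g v ^ 2) :=
    abs_sub_le_of_nonneg_of_le (integral_nonneg fun v => fdCorrection_nonneg (hεf v))
      ((integral_fdCorrection_le hεf hfL2.integrable_sq).trans (le_max_left _ _))
      (integral_nonneg fun v => fdCorrection_nonneg (hεg v))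
      ((integral_fdCorrection_le hεg hgL2.integrable_sq).trans (le_max_right _ _))
  calc |(fdEnt ε g - fdEnt ε f) - (boltzEnt f - boltzEnt g)|
      ≤ ε⁻¹ * max (ε ^ 2 * ∫ v, f v ^ 2) (ε ^ 2 * ∫ v, g v ^ 2) := by
        rw [hdiff, abs_mul, abs_of_pos (inv_pos.2 hε)]
        gcongr
    _ = ε * max (∫ v, f v ^ 2) (∫ v, g v ^ 2) := by
        rw [← mul_max_of_nonneg _ _ (sq_nonneg ε), ← mul_assoc]
        field_simp

/-- Comparison of relative entropies: if `f, g ∈ L¹ ∩ L²`, `0 ≤ f, g ≤ 1/ε` share the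
same mass, then `|ℋ_ε(f|g) − ℋ₀(f|g)| ≤ ε max(‖f‖²_{L²}, ‖g‖²_{L²})`, where
`ℋ_ε(f|g) = 𝒮_ε(g) − 𝒮_ε(f)` and `ℋ₀(f|g) = H(f) − H(g)`. -/
theorem stmt13 (ε : ℝ) (hε : 0 < ε) (f g : E3 → ℝ)
    (hfint : Integrable f) (hfL2 : MemLp f 2 volume)
    (hgint : Integrable g) (hgL2 : MemLp g 2 volume)
    (hf0 : ∀ v, 0 ≤ f v) (hfε : ∀ v, f v ≤ ε⁻¹)
    (hg0 : ∀ v, 0 ≤ g v) (hgε : ∀ v, g v ≤ ε⁻¹)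
    (hmass : (∫ v, f v) = ∫ v, g v)
    (hHf : Integrable (fun v => f v * log (f v)))
    (hHg : Integrable (fun v => g v * log (g v)))
    (hSf : Integrable (fun v =>
      ε * f v * log (ε * f v) + (1 - ε * f v) * log (1 - ε * f v)))
    (hSg : Integrable (fun v =>
      ε * g v * log (ε * g v) + (1 - ε * g v) * log (1 - ε * g v))) :
    |(fdEnt ε g - fdEnt ε f) - (boltzEnt f - boltzEnt g)| ≤
      ε * max (∫ v, (f v) ^ 2) (∫ v, (g v) ^ 2) :=
  stmt13_general ε hε f g hfint hfL2 hgint hgL2 hfε hgε hmass hHf hHg hSf hSg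

end
end

section
/- Let ε, a, b, ρ, E > 0 and suppose ℳ_ε(v) = a e^{−b|v|²}/(1+εa e^{−b|v|²}) satisfies ∫_{ℝ³} ℳ_ε dv = ρ and ∫ |v|² ℳ_ε dv = 3ρE. Then the following two-sided bounds hold: π^{3/2} a b^{−3/2}/(1 + 2^{−3/2} εa) ≤ ρ ≤ π^{3/2} a b^{−3/2}, and π^{3/2} a b^{−5/2}/(1 + 2^{−5/2} εa) ≤ 2ρE ≤ π^{3/2} a b^{−5/2}. -/
/-!
Since `ℳ_ε ≤ M`, the upper bounds are the Gaussian moments of `M`. For the lower bounds, let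
`w = 1` (mass) or `w = |v|²` (energy). Jensen's inequality for the convex `t ↦ 1 / t` under the
probability density `w M / ∫ w M` gives `∫ w ℳ_ε ≥ ∫ w M / (1 + ε ∫ w M² / ∫ w M)`, and the
Gaussian moments give `∫ w M² / ∫ w M = 2^{-3/2} a` resp. `2^{-5/2} a`.
-/

open MeasureTheory Real

noncomputable section

/-- Maxwellian `M(v) = a e^{-b|v|²}`. -/
def Mw (a b : ℝ) (v : E3) : ℝ := a * exp (-b * ‖v‖ ^ 2)

/-- Fermi–Dirac statistics `ℳ_ε = M/(1+εM)`. -/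
def FD (ε a b : ℝ) (v : E3) : ℝ := Mw a b v / (1 + ε * Mw a b v)

open Set

section Gaussian

variable {V : Type*} [NormedAddCommGroup V] [InnerProductSpace ℝ V] [FiniteDimensional ℝ V]
  [MeasurableSpace V] [BorelSpace V]

theorem integral_pow_add_two_mul_exp_neg_mul_sq {β : ℝ} (hβ : 0 < β) (k : ℕ) :
    ∫ y in Ioi (0 : ℝ), y ^ (k + 2) * exp (-β * y ^ 2) =
      (k + 1) / (2 * β) * ∫ y in Ioi (0 : ℝ), y ^ k * exp (-β * y ^ 2) := by
  have moment (q : ℕ) : ∫ y in Ioi (0 : ℝ), y ^ q * exp (-β * y ^ 2) =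
      β ^ (-((q : ℝ) + 1) / 2) * (1 / 2) * Gamma (((q : ℝ) + 1) / 2) := by
    have hq : -1 < (q : ℝ) := by linarith [q.cast_nonneg (α := ℝ)]
    rw [← integral_rpow_mul_exp_neg_mul_rpow two_pos hq hβ]
    simp_rw [← rpow_natCast, Nat.cast_ofNat]
  have hk : ((k : ℝ) + 1) / 2 ≠ 0 := by positivity
  rw [moment, moment, Nat.cast_add, Nat.cast_two,
    show ((k : ℝ) + 2 + 1) / 2 = ((k : ℝ) + 1) / 2 + 1 by ring, Gamma_add_one hk,
    show -((k : ℝ) + 2 + 1) / 2 = -((k : ℝ) + 1) / 2 - 1 by ring, rpow_sub_one hβ.ne']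
  field_simp

theorem integral_sq_norm_mul_rexp_neg_mul_sq_norm [Nontrivial V] {β : ℝ} (hβ : 0 < β) :
    ∫ v : V, ‖v‖ ^ 2 * exp (-β * ‖v‖ ^ 2) =
      Module.finrank ℝ V / (2 * β) * ∫ v : V, exp (-β * ‖v‖ ^ 2) := by
  have hn : Module.finrank ℝ V - 1 + 1 = Module.finrank ℝ V :=
    Nat.sub_add_cancel Module.finrank_pos
  rw [integral_fun_norm_addHaar volume (fun y => y ^ 2 * exp (-β * y ^ 2)),
    integral_fun_norm_addHaar volume (fun y => exp (-β * y ^ 2))]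
  simp only [smul_eq_mul, ← mul_assoc, ← pow_add]
  rw [integral_pow_add_two_mul_exp_neg_mul_sq hβ, ← Nat.cast_add_one, hn]
  ring

theorem integrable_rexp_neg_mul_sq_norm {β : ℝ} (hβ : 0 < β) :
    Integrable fun v : V => exp (-β * ‖v‖ ^ 2) :=
  .of_integral_ne_zero (by rw [GaussianFourier.integral_rexp_neg_mul_sq_norm hβ]; positivity)

theorem integrable_sq_norm_mul_rexp_neg_mul_sq_norm [Nontrivial V] {β : ℝ} (hβ : 0 < β) :
    Integrable fun v : V => ‖v‖ ^ 2 * exp (-β * ‖v‖ ^ 2) :=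
  .of_integral_ne_zero (by
    rw [integral_sq_norm_mul_rexp_neg_mul_sq_norm hβ,
      GaussianFourier.integral_rexp_neg_mul_sq_norm hβ]
    have := Module.finrank_pos (R := ℝ) (M := V)
    positivity)

end Gaussian

-- The tangent line of `t ↦ 1 / t` at `t = c`, evaluated at `t = 1 + ε x` and multiplied by `x`.
theorem two_div_mul_sub_le_div_one_add_mul {x ε c : ℝ} (hx : 0 ≤ x) (hε : 0 ≤ ε) (hc : 0 < c) :
    2 / c * x - (x + ε * x ^ 2) / c ^ 2 ≤ x / (1 + ε * x) := by
  have hden : 0 < 1 + ε * x := by positivity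
  rw [← sub_nonneg]
  have key : x / (1 + ε * x) - (2 / c * x - (x + ε * x ^ 2) / c ^ 2) =
      x * (1 + ε * x - c) ^ 2 / ((1 + ε * x) * c ^ 2) := by
    field_simp
    ring
  rw [key]
  positivity

theorem integral_mul_div_one_add_mul_bounds {α : Type*} [MeasurableSpace α] {μ : Measure α}
    {w M : α → ℝ} {ε d : ℝ} (hε : 0 ≤ ε) (hd : 0 ≤ d) (hw : ∀ x, 0 ≤ w x)
    (hM : ∀ x, 0 ≤ M x) (hMm : AEMeasurable M μ) (hwM : Integrable (fun x => w x * M x) μ)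
    (hwM2 : Integrable (fun x => w x * M x ^ 2) μ)
    (hmoment : ∫ x, w x * M x ^ 2 ∂μ = d * ∫ x, w x * M x ∂μ) :
    (∫ x, w x * M x ∂μ) / (1 + ε * d) ≤ ∫ x, w x * (M x / (1 + ε * M x)) ∂μ ∧
      ∫ x, w x * (M x / (1 + ε * M x)) ∂μ ≤ ∫ x, w x * M x ∂μ := by
  have hden (x : α) : 0 < 1 + ε * M x := add_pos_of_pos_of_nonneg one_pos (mul_nonneg hε (hM x))
  have hle (x : α) : w x * (M x / (1 + ε * M x)) ≤ w x * M x :=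
    mul_le_mul_of_nonneg_left
      (div_le_self (hM x) (le_add_of_nonneg_right (mul_nonneg hε (hM x)))) (hw x)
  have hint : Integrable (fun x => w x * (M x / (1 + ε * M x))) μ := by
    refine hwM.mono' ?_ (.of_forall fun x => ?_)
    · simp_rw [← mul_div_assoc]
      exact (hwM.aemeasurable.div (by fun_prop)).aestronglyMeasurable
    · rw [norm_of_nonneg (mul_nonneg (hw x) (div_nonneg (hM x) (hden x).le))]
      exact hle x
  refine ⟨?_, integral_mono hint hwM hle⟩
  set c := 1 + ε * d
  have hc : 0 < c := by positivity
  have hquad : Integrable (fun x => w x * M x + ε * (w x * M x ^ 2)) μ :=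
    hwM.add (hwM2.const_mul ε)
  -- `c` is the mean of `1 + ε M` against `w M`, so integrating the tangent line there is Jensen.
  calc (∫ x, w x * M x ∂μ) / c
      = ∫ x, 2 / c * (w x * M x) - (w x * M x + ε * (w x * M x ^ 2)) / c ^ 2 ∂μ := by
        rw [integral_sub (hwM.const_mul _) (hquad.div_const _), integral_const_mul, integral_div,
          integral_add hwM (hwM2.const_mul ε), integral_const_mul, hmoment]
        field_simp
        ring
    _ ≤ ∫ x, w x * (M x / (1 + ε * M x)) ∂μ := by
        refine integral_mono ((hwM.const_mul _).sub (hquad.div_const _)) hint fun x => ?_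
        calc _ = w x * (2 / c * M x - (M x + ε * M x ^ 2) / c ^ 2) := by ring
          _ ≤ _ := mul_le_mul_of_nonneg_left
            (two_div_mul_sub_le_div_one_add_mul (hM x) hε hc) (hw x)

theorem Mw_nonneg {a : ℝ} (ha : 0 ≤ a) (b : ℝ) (v : E3) : 0 ≤ Mw a b v := by
  unfold Mw
  positivity

theorem Mw_sq (a b : ℝ) (v : E3) : Mw a b v ^ 2 = Mw (a ^ 2) (2 * b) v := by
  rw [Mw, Mw, mul_pow, ← exp_nat_mul]
  ring_nf

theorem integral_Mw (a : ℝ) {b : ℝ} (hb : 0 < b) :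
    ∫ v, Mw a b v = π ^ ((3 : ℝ) / 2) * a * b ^ (-(3 : ℝ) / 2) := by
  simp only [Mw, integral_const_mul, GaussianFourier.integral_rexp_neg_mul_sq_norm hb,
    finrank_euclideanSpace_fin, div_rpow pi_nonneg hb.le, neg_div, rpow_neg hb.le]
  push_cast
  ring

theorem integral_sq_norm_mul_Mw (a : ℝ) {b : ℝ} (hb : 0 < b) :
    ∫ v, ‖v‖ ^ 2 * Mw a b v = 3 / 2 * (π ^ ((3 : ℝ) / 2) * a * b ^ (-(5 : ℝ) / 2)) := by
  have h := integral_sq_norm_mul_rexp_neg_mul_sq_norm (V := E3) hb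
  rw [finrank_euclideanSpace_fin] at h
  calc ∫ v, ‖v‖ ^ 2 * Mw a b v = 3 / (2 * b) * ∫ v, Mw a b v := by
        simp only [Mw, mul_left_comm _ a, integral_const_mul, h]
        push_cast
        ring
    _ = _ := by
        rw [integral_Mw a hb, show -(5 : ℝ) / 2 = -(3 : ℝ) / 2 - 1 by norm_num,
          rpow_sub_one hb.ne']
        field_simp

theorem integral_Mw_sq {a b : ℝ} (hb : 0 < b) :
    ∫ v, Mw a b v ^ 2 = 2 ^ (-(3 : ℝ) / 2) * a * ∫ v, Mw a b v := by
  simp only [Mw_sq, integral_Mw _ hb, integral_Mw _ (mul_pos two_pos hb),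
    mul_rpow zero_le_two hb.le]
  ring

theorem integral_sq_norm_mul_Mw_sq {a b : ℝ} (hb : 0 < b) :
    ∫ v, ‖v‖ ^ 2 * Mw a b v ^ 2 = 2 ^ (-(5 : ℝ) / 2) * a * ∫ v, ‖v‖ ^ 2 * Mw a b v := by
  simp only [Mw_sq, integral_sq_norm_mul_Mw _ hb,
    integral_sq_norm_mul_Mw _ (mul_pos two_pos hb), mul_rpow zero_le_two hb.le]
  ring

theorem integrable_Mw (a : ℝ) {b : ℝ} (hb : 0 < b) : Integrable (Mw a b) :=
  (integrable_rexp_neg_mul_sq_norm hb).const_mul a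

theorem integrable_sq_norm_mul_Mw (a : ℝ) {b : ℝ} (hb : 0 < b) :
    Integrable fun v => ‖v‖ ^ 2 * Mw a b v := by
  simpa only [Mw, mul_left_comm _ a] using
    (integrable_sq_norm_mul_rexp_neg_mul_sq_norm (V := E3) hb).const_mul a

theorem stmt15_general (ε a b ρ E : ℝ) (hε : 0 < ε) (ha : 0 < a) (hb : 0 < b)
    (hmass : (∫ v, FD ε a b v) = ρ)
    (henergy : (∫ v, ‖v‖ ^ 2 * FD ε a b v) = 3 * ρ * E) :
    (π ^ ((3 : ℝ) / 2) * a * b ^ (-(3 : ℝ) / 2) / (1 + 2 ^ (-(3 : ℝ) / 2) * ε * a) ≤ ρ ∧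
      ρ ≤ π ^ ((3 : ℝ) / 2) * a * b ^ (-(3 : ℝ) / 2)) ∧
    (π ^ ((3 : ℝ) / 2) * a * b ^ (-(5 : ℝ) / 2) / (1 + 2 ^ (-(5 : ℝ) / 2) * ε * a) ≤
        2 * ρ * E ∧
      2 * ρ * E ≤ π ^ ((3 : ℝ) / 2) * a * b ^ (-(5 : ℝ) / 2)) := by
  have hM := Mw_nonneg ha.le b
  have hMm := (integrable_Mw a hb).aemeasurable
  have hb2 : 0 < 2 * b := mul_pos two_pos hb
  have mass := integral_mul_div_one_add_mul_bounds (w := fun _ => 1) hε.le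
    (by positivity : 0 ≤ 2 ^ (-(3 : ℝ) / 2) * a) (fun _ => zero_le_one) hM hMm
    (by simpa only [one_mul] using integrable_Mw a hb)
    (by simpa only [one_mul, Mw_sq] using integrable_Mw (a ^ 2) hb2)
    (by simpa only [one_mul] using integral_Mw_sq (a := a) hb)
  have energy := integral_mul_div_one_add_mul_bounds (w := fun v : E3 => ‖v‖ ^ 2) hε.le
    (by positivity : 0 ≤ 2 ^ (-(5 : ℝ) / 2) * a) (fun _ => by positivity) hM hMm
    (integrable_sq_norm_mul_Mw a hb)
    (by simpa only [Mw_sq] using integrable_sq_norm_mul_Mw (a ^ 2) hb2)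
    (integral_sq_norm_mul_Mw_sq hb)
  simp only [one_mul, integral_Mw a hb, integral_sq_norm_mul_Mw a hb] at mass energy
  simp only [FD] at hmass henergy
  rw [hmass] at mass
  rw [henergy] at energy
  refine ⟨⟨?_, mass.2⟩, ?_, by linarith [energy.2]⟩
  · convert mass.1 using 3
    ring
  · calc _ = 2 / 3 * (3 / 2 * (π ^ ((3 : ℝ) / 2) * a * b ^ (-(5 : ℝ) / 2)) /
            (1 + ε * (2 ^ (-(5 : ℝ) / 2) * a))) := by ring
      _ ≤ 2 * ρ * E := by linarith [energy.1]

/-- Two-sided bounds for the parameters of the Fermi–Dirac statistics with mass `ρ`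
and energy `3ρE`:
`π^{3/2} a b^{-3/2}/(1+2^{-3/2}εa) ≤ ρ ≤ π^{3/2} a b^{-3/2}` and
`π^{3/2} a b^{-5/2}/(1+2^{-5/2}εa) ≤ 2ρE ≤ π^{3/2} a b^{-5/2}`. -/
theorem stmt15 (ε a b ρ E : ℝ) (hε : 0 < ε) (ha : 0 < a) (hb : 0 < b)
    (hρ : 0 < ρ) (hE : 0 < E)
    (hmass : (∫ v, FD ε a b v) = ρ)
    (henergy : (∫ v, ‖v‖ ^ 2 * FD ε a b v) = 3 * ρ * E) :
    (π ^ ((3 : ℝ) / 2) * a * b ^ (-(3 : ℝ) / 2) / (1 + 2 ^ (-(3 : ℝ) / 2) * ε * a) ≤ ρ ∧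
      ρ ≤ π ^ ((3 : ℝ) / 2) * a * b ^ (-(3 : ℝ) / 2)) ∧
    (π ^ ((3 : ℝ) / 2) * a * b ^ (-(5 : ℝ) / 2) / (1 + 2 ^ (-(5 : ℝ) / 2) * ε * a) ≤
        2 * ρ * E ∧
      2 * ρ * E ≤ π ^ ((3 : ℝ) / 2) * a * b ^ (-(5 : ℝ) / 2)) :=
  stmt15_general ε a b ρ E hε ha hb hmass henergy

end
end
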